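/- arXiv:2107.03097 — 5 statements merged into one kernel-verified Lean document; each statement's English description precedes it below -/
import Mathlib

section
/- Let γ_0, γ_1, γ_2, c, k be positive real numbers with γ_2 ≠ 1, and let u_1, u_2 be integers with |u_1| ≤ M and |u_2| ≤ M for a positive number M. Assume that |log γ_0 + u_1 log γ_1 + u_2 log γ_2| < c·w^{−k} holds for a positive number w. Let p/q be a convergent of the continued fraction expansion of (log γ_1)/(log γ_2). If ε := ‖q·(log γ_0)/(log γ_2)‖ − M·‖q·(log γ_1)/(log γ_2)‖ is positive, then w < (q·c/(ε·|log γ_2|))^{1/k}. -/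
/-! Put `x = q log γ₀ / log γ₂` and `y = q log γ₁ / log γ₂`. Dividing the linear form
`Λ = log γ₀ + u₁ log γ₁ + u₂ log γ₂` by `log γ₂` and multiplying by `q` gives
`x + u₁ y = q Λ / log γ₂ - q u₂`, so `‖x + u₁ y‖ ≤ q |Λ| / |log γ₂|`. On the other hand
`‖x‖ ≤ ‖x + u₁ y‖ + |u₁| ‖y‖`, hence `ε ≤ ‖x + u₁ y‖ < q c w^(-k) / |log γ₂|`,
which rearranges to the bound on `w`. -/

section Round

variable {α : Type*}

section CommRing

variable [CommRing α] [LinearOrder α] [IsStrictOrderedRing α] [FloorRing α]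

theorem abs_intCast_mul_sub_round_le (n : ℤ) (x : α) :
    |n * x - round (n * x)| ≤ |(n : α)| * |x - round x| :=
  calc |n * x - round (n * x)| ≤ |n * x - ((n * round x : ℤ) : α)| := round_le _ _
    _ = |(n : α)| * |x - round x| := by rw [← abs_mul]; push_cast; ring_nf

theorem abs_sub_round_le_add (a b : α) :
    |a - round a| ≤ |a + b - round (a + b)| + |b - round b| :=
  calc |a - round a| ≤ |a - ((round (a + b) - round b : ℤ) : α)| := round_le _ _
    _ = |(a + b - round (a + b)) - (b - round b)| := by push_cast; ring_nf
    _ ≤ |a + b - round (a + b)| + |b - round b| := abs_sub _ _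

theorem abs_sub_round_sub_mul_le {M : α} {n : ℤ} (hn : |(n : α)| ≤ M) (x y : α) :
    |x - round x| - M * |y - round y| ≤ |x + n * y - round (x + n * y)| := by
  have hsub := abs_sub_round_le_add x (n * y)
  have hmul : |n * y - round (n * y)| ≤ M * |y - round y| :=
    (abs_intCast_mul_sub_round_le n y).trans
      (mul_le_mul_of_nonneg_right hn (abs_nonneg _))
  rw [sub_le_iff_le_add]
  exact hsub.trans (add_le_add_right hmul _)

end CommRing

variable [Field α] [LinearOrder α] [IsStrictOrderedRing α] [FloorRing α]

theorem abs_sub_round_sub_mul_le_linear_form {M l₀ l₁ l₂ : α} (hl₂ : l₂ ≠ 0)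
    {u₁ : ℤ} (hu₁ : |(u₁ : α)| ≤ M) (u₂ q : ℤ) :
    |q * (l₀ / l₂) - round (q * (l₀ / l₂))| - M * |q * (l₁ / l₂) - round (q * (l₁ / l₂))| ≤
      |(q : α)| * |l₀ + u₁ * l₁ + u₂ * l₂| / |l₂| := by
  have hform : q * (l₀ / l₂) + u₁ * (q * (l₁ / l₂)) - ((-(q * u₂) : ℤ) : α) =
      q * (l₀ + u₁ * l₁ + u₂ * l₂) / l₂ := by
    push_cast
    field_simp
    ring
  set x := q * (l₀ / l₂)
  set y := q * (l₁ / l₂)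
  calc |x - round x| - M * |y - round y| ≤ |x + u₁ * y - round (x + u₁ * y)| :=
        abs_sub_round_sub_mul_le hu₁ x y
    _ ≤ |x + u₁ * y - ((-(q * u₂) : ℤ) : α)| := round_le _ _
    _ = |(q : α)| * |l₀ + u₁ * l₁ + u₂ * l₂| / |l₂| := by rw [hform, abs_div, abs_mul]

end Round

theorem baker_davenport_reduction_general
    (γ0 γ1 γ2 c k M w : ℝ) (u1 u2 : ℤ) (q : ℕ)
    (hγ2 : 0 < γ2) (hγ2ne : γ2 ≠ 1)
    (hc : 0 < c) (hk : 0 < k) (hw : 0 < w) (hq : 0 < q)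
    (hu1 : |(u1 : ℝ)| ≤ M)
    (hΛ : |Real.log γ0 + (u1 : ℝ) * Real.log γ1 + (u2 : ℝ) * Real.log γ2| < c * w ^ (-k))
    (ε : ℝ)
    (hε : ε =
      |(q : ℝ) * (Real.log γ0 / Real.log γ2) -
          (round ((q : ℝ) * (Real.log γ0 / Real.log γ2)) : ℤ)| -
        M * |(q : ℝ) * (Real.log γ1 / Real.log γ2) -
          (round ((q : ℝ) * (Real.log γ1 / Real.log γ2)) : ℤ)|)
    (hεpos : 0 < ε) :
    w < ((q : ℝ) * c / (ε * |Real.log γ2|)) ^ (1 / k) := by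
  have hlog_ne : Real.log γ2 ≠ 0 := Real.log_ne_zero_of_pos_of_ne_one hγ2 hγ2ne
  have hlog : 0 < |Real.log γ2| := abs_pos.mpr hlog_ne
  have hwk : 0 < w ^ k := Real.rpow_pos_of_pos hw k
  have hbound := abs_sub_round_sub_mul_le_linear_form (M := M) (l₀ := Real.log γ0)
    (l₁ := Real.log γ1) hlog_ne hu1 u2 q
  simp only [Int.cast_natCast, Nat.abs_cast] at hbound
  rw [← hε] at hbound
  have hεlt : ε * |Real.log γ2| < q * c / w ^ k := by
    rw [← lt_div_iff₀ hlog]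
    calc ε ≤ q * |Real.log γ0 + u1 * Real.log γ1 + u2 * Real.log γ2| / |Real.log γ2| := hbound
      _ < q * (c * w ^ (-k)) / |Real.log γ2| := by gcongr
      _ = q * c / w ^ k / |Real.log γ2| := by rw [Real.rpow_neg hw.le]; ring
  rw [one_div, Real.lt_rpow_inv_iff_of_pos hw.le (by positivity) hk,
    lt_div_iff₀ (by positivity)]
  rwa [lt_div_iff₀ hwk, mul_comm] at hεlt

/-- Baker–Davenport reduction: if `|log γ₀ + u₁ log γ₁ + u₂ log γ₂| < c·w^(−k)`,
`p/q` is a convergent of the continued fraction of `log γ₁ / log γ₂`, and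
`ε = ‖q·(log γ₀/log γ₂)‖ − M·‖q·(log γ₁/log γ₂)‖ > 0`, then
`w < (q·c/(ε·|log γ₂|))^(1/k)`.  Here `‖x‖ = |x - round x|` is the distance
to the nearest integer. -/
theorem baker_davenport_reduction
    (γ0 γ1 γ2 c k M w : ℝ) (u1 u2 : ℤ) (p : ℤ) (q : ℕ) (m : ℕ)
    (hγ0 : 0 < γ0) (hγ1 : 0 < γ1) (hγ2 : 0 < γ2) (hγ2ne : γ2 ≠ 1)
    (hc : 0 < c) (hk : 0 < k) (hM : 0 < M) (hw : 0 < w) (hq : 0 < q)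
    (hu1 : |(u1 : ℝ)| ≤ M) (hu2 : |(u2 : ℝ)| ≤ M)
    (hconv : ((p : ℝ) / (q : ℝ)) = (GenContFract.of (Real.log γ1 / Real.log γ2)).convs m)
    (hΛ : |Real.log γ0 + (u1 : ℝ) * Real.log γ1 + (u2 : ℝ) * Real.log γ2| < c * w ^ (-k))
    (ε : ℝ)
    (hε : ε =
      |(q : ℝ) * (Real.log γ0 / Real.log γ2) -
          (round ((q : ℝ) * (Real.log γ0 / Real.log γ2)) : ℤ)| -
        M * |(q : ℝ) * (Real.log γ1 / Real.log γ2) -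
          (round ((q : ℝ) * (Real.log γ1 / Real.log γ2)) : ℤ)|)
    (hεpos : 0 < ε) :
    w < ((q : ℝ) * c / (ε * |Real.log γ2|)) ^ (1 / k) :=
  baker_davenport_reduction_general γ0 γ1 γ2 c k M w u1 u2 q hγ2 hγ2ne hc hk hw hq hu1 hΛ ε hε hεpos
end

section
/- Let x, c, a be positive real numbers with x ≥ 1, a ≥ 2 and x < c·(a + log x). Then x < 2c·(a + log c). -/
/-! The tangent line of the concave function `log` at `2c` gives
`c log x ≤ c log (2c) + x/2 - c`, and `log 2 ≤ 1` turns this into `c log x ≤ c log c + x/2`.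
Substituting into `x < c(a + log x)` leaves `x/2 < c(a + log c)`. -/

open Real

lemma mul_log_le_mul_log_add_sub {x b : ℝ} (hx : 0 < x) (hb : 0 < b) :
    b * log x ≤ b * log b + x - b := by
  have htangent : log x - log b ≤ x / b - 1 := by
    simpa only [log_div hx.ne' hb.ne'] using log_le_sub_one_of_pos (div_pos hx hb)
  have hscaled := mul_le_mul_of_nonneg_left htangent hb.le
  rw [mul_sub, mul_sub, mul_div_cancel₀ x hb.ne', mul_one] at hscaled
  linarith

lemma log_two_le_one : log 2 ≤ 1 := by
  linarith [log_le_sub_one_of_pos (two_pos : (0 : ℝ) < 2)]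

theorem lt_of_lt_mul_add_log_general (x c a : ℝ) (hx : 1 ≤ x) (hc : 0 < c)
    (h : x < c * (a + Real.log x)) : x < 2 * c * (a + Real.log c) := by
  have htangent := mul_log_le_mul_log_add_sub (by linarith : 0 < x) (by positivity : 0 < 2 * c)
  have hlog2c : log (2 * c) = log 2 + log c := log_mul two_ne_zero hc.ne'
  have hclog2 : c * log 2 ≤ c := mul_le_of_le_one_right hc.le log_two_le_one
  rw [hlog2c] at htangent
  linarith

/-- If `x ≥ 1`, `a ≥ 2`, `c > 0` and `x < c(a + log x)`, then `x < 2c(a + log c)`. -/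
theorem lt_of_lt_mul_add_log (x c a : ℝ) (hx : 1 ≤ x) (hc : 0 < c) (ha : 2 ≤ a)
    (h : x < c * (a + Real.log x)) : x < 2 * c * (a + Real.log c) :=
  lt_of_lt_mul_add_log_general x c a hx hc h
end

section
/- Let r and s be integers with 2 ≤ r ≤ s − 2 and let f(X) = X·(X − r)·(X − s) − 1. Then f is irreducible over ℚ and has three distinct real roots. -/
/-!
A rational root of the monic integer cubic `X(X - r)(X - s) - 1` is an integer `n` with
`n(n - r)(n - s) = 1`, so `n` and `n - s` are both `±1`, which is impossible once `s ≥ 3`;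
a cubic without rational roots is irreducible. The values of the cubic at `0, 1, r + 1, s + 1`
alternate in sign, so the intermediate value theorem gives three real roots.
-/

open Polynomial

theorem Polynomial.Monic.irreducible_map_rat_of_natDegree_le_three {p : ℤ[X]} (hp : p.Monic)
    (h2 : 2 ≤ p.natDegree) (h3 : p.natDegree ≤ 3) (hroot : ∀ n : ℤ, ¬ p.IsRoot n) :
    Irreducible (p.map (Int.castRingHom ℚ)) := by
  have hdeg : (p.map (Int.castRingHom ℚ)).natDegree = p.natDegree := hp.natDegree_map _
  rw [(hp.map _).irreducible_iff_roots_eq_zero_of_degree_le_three (hdeg ▸ h2) (hdeg ▸ h3),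
    Multiset.eq_zero_iff_forall_notMem]
  intro q hq
  have hq : aeval q p = 0 := by
    rw [aeval_def, eval₂_eq_eval_map]
    exact (mem_roots (hp.map _).ne_zero).mp hq
  obtain ⟨n, rfl⟩ := isInteger_of_is_root_of_monic hp hq
  rw [aeval_algebraMap_apply, map_eq_zero_iff _ (algebraMap ℤ ℚ).injective_int] at hq
  exact hroot n hq

theorem Int.mul_sub_mul_sub_ne_one (n r s : ℤ) (hs : 3 ≤ s) :
    n * (n - r) * (n - s) ≠ 1 := by
  intro h
  have hn := Int.eq_one_or_neg_one_of_mul_eq_one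
    (show n * ((n - r) * (n - s)) = 1 by rw [← h]; ring)
  have hns := Int.eq_one_or_neg_one_of_mul_eq_one
    (show (n - s) * (n * (n - r)) = 1 by rw [← h]; ring)
  omega

theorem exists_three_zeros_of_sign_changes {g : ℝ → ℝ} (hg : Continuous g) {a b c d : ℝ}
    (hab : a ≤ b) (hbc : b ≤ c) (hcd : c ≤ d)
    (ha : g a < 0) (hb : 0 < g b) (hc : g c < 0) (hd : 0 < g d) :
    ∃ x y z, x < y ∧ y < z ∧ g x = 0 ∧ g y = 0 ∧ g z = 0 := by
  obtain ⟨x, hx, hgx⟩ := intermediate_value_Ioo hab hg.continuousOn ⟨ha, hb⟩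
  obtain ⟨y, hy, hgy⟩ := intermediate_value_Ioo' hbc hg.continuousOn ⟨hc, hb⟩
  obtain ⟨z, hz, hgz⟩ := intermediate_value_Ioo hcd hg.continuousOn ⟨hc, hd⟩
  exact ⟨x, y, z, hx.2.trans hy.1, hy.2.trans hz.1, hgx, hgy, hgz⟩

open Polynomial in
/-- For integers `2 ≤ r ≤ s - 2`, the polynomial `f(X) = X(X - r)(X - s) - 1`
is irreducible over `ℚ` and has three distinct real roots. -/
theorem thomas_cubic_irreducible_three_real_roots (r s : ℤ) (hr : 2 ≤ r) (hs : r ≤ s - 2) :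
    Irreducible ((X * (X - C (r : ℚ)) * (X - C (s : ℚ)) - 1 : Polynomial ℚ)) ∧
    ∃ a b c : ℝ, a < b ∧ b < c ∧
      a * (a - (r : ℝ)) * (a - (s : ℝ)) - 1 = 0 ∧
      b * (b - (r : ℝ)) * (b - (s : ℝ)) - 1 = 0 ∧
      c * (c - (r : ℝ)) * (c - (s : ℝ)) - 1 = 0 := by
  set f : ℤ[X] := X * (X - C r) * (X - C s) - 1
  have hf : f.natDegree = 3 := by simp only [f]; compute_degree!
  have hmonic : f.Monic := by simp only [f, Monic, leadingCoeff, hf]; compute_degree!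
  constructor
  · convert hmonic.irreducible_map_rat_of_natDegree_le_three (by omega) hf.le fun n hn ↦
      Int.mul_sub_mul_sub_ne_one n r s (by omega) (by simpa [f, sub_eq_zero] using hn)
    simp [f]
  · have hr' : (2 : ℝ) ≤ r := by exact_mod_cast hr
    have hs' : (r : ℝ) + 2 ≤ s := by exact_mod_cast (by omega : r + 2 ≤ s)
    exact exists_three_zeros_of_sign_changes (g := fun x ↦ x * (x - r) * (x - s) - 1)
      (by fun_prop) zero_le_one (by linarith) (by linarith : (r : ℝ) + 1 ≤ s + 1)
      (by norm_num) (by nlinarith) (by nlinarith) (by nlinarith)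
end

section
/- Let n ≥ 29 be an integer, let F_n be the n-th Fibonacci number, and set G_1 = 0, G_2 = F_n, G_3 = 2^n. Then the polynomial f_n(X) = X·(X − F_n)·(X − 2^n) − 1 has three distinct real roots α^(1) < α^(2) < α^(3), and they satisfy |α^(i) − G_i| ≤ 0.5^n for i = 1, 2, 3. -/
/-!
Write `a = Fₙ`, `b = 2ⁿ` and `ε = 2⁻ⁿ = 1/b`. The cubic `x(x - a)(x - b) - 1` equals `-1` at
`0`, `a` and `b`, while at `ε`, `a - ε` and `b + ε` it equals `(a - ε)(1 - ε²) - 1`,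
`(a - ε)(1 - aε + ε²) - 1` and `(1 + ε²)(b + ε - a) - 1`, all nonnegative once `a ≥ 3` and
`2a ≤ b` (so `aε ≤ 1/2`). The intermediate value theorem gives a root in each of the three
disjoint intervals, and a cubic has no further roots.
-/

open Set

theorem Nat.two_mul_fib_le_two_pow (n : ℕ) : 2 * fib n ≤ 2 ^ n := by
  induction n using Nat.twoStepInduction with
  | zero => simp
  | one => simp
  | more n ih₀ ih₁ =>
    rw [fib_add_two, pow_succ, pow_succ]
    have : 2 ^ n ≤ 2 ^ (n + 1) := Nat.pow_le_pow_right two_pos n.le_succ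
    rw [pow_succ] at ih₁ this
    omega

section Cubic

variable {R : Type*} [CommRing R] [NoZeroDivisors R]

theorem quadratic_coeffs_eq_zero_of_three_roots {a b c x y z : R}
    (hxy : x ≠ y) (hxz : x ≠ z) (hyz : y ≠ z)
    (hx : a * x ^ 2 + b * x + c = 0) (hy : a * y ^ 2 + b * y + c = 0)
    (hz : a * z ^ 2 + b * z + c = 0) :
    a = 0 ∧ b = 0 ∧ c = 0 := by
  have hxy' : a * (x + y) + b = 0 :=
    (mul_eq_zero.mp (by linear_combination hx - hy : (x - y) * (a * (x + y) + b) = 0)).resolve_left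
      (sub_ne_zero.mpr hxy)
  have hxz' : a * (x + z) + b = 0 :=
    (mul_eq_zero.mp (by linear_combination hx - hz : (x - z) * (a * (x + z) + b) = 0)).resolve_left
      (sub_ne_zero.mpr hxz)
  have ha : a = 0 :=
    (mul_eq_zero.mp (by linear_combination hxy' - hxz' : (y - z) * a = 0)).resolve_left
      (sub_ne_zero.mpr hyz)
  have hb : b = 0 := by linear_combination hxy' - (x + y) * ha
  exact ⟨ha, hb, by linear_combination hx - x ^ 2 * ha - x * hb⟩

-- The difference of the two sides is a quadratic vanishing at the three points `x, y, z`.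
theorem cubic_eq_prod_of_three_roots {p q r x y z : R}
    (hxy : x ≠ y) (hxz : x ≠ z) (hyz : y ≠ z)
    (hx : x ^ 3 + p * x ^ 2 + q * x + r = 0) (hy : y ^ 3 + p * y ^ 2 + q * y + r = 0)
    (hz : z ^ 3 + p * z ^ 2 + q * z + r = 0) (t : R) :
    t ^ 3 + p * t ^ 2 + q * t + r = (t - x) * (t - y) * (t - z) := by
  obtain ⟨ha, hb, hc⟩ := quadratic_coeffs_eq_zero_of_three_roots
    (a := p + (x + y + z)) (b := q - (x * y + x * z + y * z)) (c := r + x * y * z) hxy hxz hyz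
    (by linear_combination hx) (by linear_combination hy) (by linear_combination hz)
  linear_combination t ^ 2 * ha + t * hb + hc

theorem eq_or_eq_or_eq_of_cubic_roots {p q r x y z t : R}
    (hxy : x ≠ y) (hxz : x ≠ z) (hyz : y ≠ z)
    (hx : x ^ 3 + p * x ^ 2 + q * x + r = 0) (hy : y ^ 3 + p * y ^ 2 + q * y + r = 0)
    (hz : z ^ 3 + p * z ^ 2 + q * z + r = 0) (ht : t ^ 3 + p * t ^ 2 + q * t + r = 0) :
    t = x ∨ t = y ∨ t = z := by
  rw [cubic_eq_prod_of_three_roots hxy hxz hyz hx hy hz] at ht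
  simpa only [mul_eq_zero, sub_eq_zero, or_assoc] using ht

end Cubic

section RootsNear

variable {a b ε : ℝ}

theorem exists_root_near_zero (ha : 3 ≤ a) (hab : 2 * a ≤ b) (hε : 0 < ε) (hεb : ε * b = 1) :
    ∃ x ∈ Icc 0 ε, x * (x - a) * (x - b) - 1 = 0 := by
  have hε6 : ε ≤ 1 / 6 := by nlinarith
  have hsign : 0 ≤ ε * (ε - a) * (ε - b) - 1 := by
    have : ε * (ε - a) * (ε - b) - 1 = (a - ε) * (1 - ε ^ 2) - 1 := by
      linear_combination (a - ε) * hεb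
    rw [this]
    nlinarith [mul_le_mul_of_nonneg_right (show 2 ≤ a - ε by linarith)
      (show 0 ≤ 1 - ε ^ 2 by nlinarith)]
  exact intermediate_value_Icc hε.le (by fun_prop) ⟨by norm_num, hsign⟩

theorem exists_root_near_left (ha : 3 ≤ a) (hab : 2 * a ≤ b) (hε : 0 < ε) (hεb : ε * b = 1) :
    ∃ x ∈ Icc (a - ε) a, x * (x - a) * (x - b) - 1 = 0 := by
  have hεa : a * ε ≤ 1 / 2 := by nlinarith
  have hsign : 0 ≤ (a - ε) * (a - ε - a) * (a - ε - b) - 1 := by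
    have : (a - ε) * (a - ε - a) * (a - ε - b) - 1 = (a - ε) * (1 - a * ε + ε ^ 2) - 1 := by
      linear_combination (a - ε) * hεb
    rw [this]
    nlinarith [mul_le_mul_of_nonneg_left (show 1 / 2 ≤ 1 - a * ε + ε ^ 2 by nlinarith)
      (show 0 ≤ a - ε by nlinarith)]
  exact intermediate_value_Icc' (by linarith) (by fun_prop) ⟨by norm_num, hsign⟩

theorem exists_root_near_right (ha : 3 ≤ a) (hab : 2 * a ≤ b) (hε : 0 < ε) (hεb : ε * b = 1) :
    ∃ x ∈ Icc b (b + ε), x * (x - a) * (x - b) - 1 = 0 := by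
  have hsign : 0 ≤ (b + ε) * (b + ε - a) * (b + ε - b) - 1 := by
    have : (b + ε) * (b + ε - a) * (b + ε - b) - 1 = (1 + ε ^ 2) * (b + ε - a) - 1 := by
      linear_combination (b + ε - a) * hεb
    rw [this]
    nlinarith [mul_nonneg (sq_nonneg ε) hε.le]
  exact intermediate_value_Icc (by linarith) (by fun_prop) ⟨by norm_num, hsign⟩

theorem exists_three_roots_near (ha : 3 ≤ a) (hab : 2 * a ≤ b) (hε : 0 < ε) (hεb : ε * b = 1) :
    ∃ α : Fin 3 → ℝ, α 0 < α 1 ∧ α 1 < α 2 ∧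
      (∀ i, α i * (α i - a) * (α i - b) - 1 = 0) ∧
      (∀ x : ℝ, x * (x - a) * (x - b) - 1 = 0 → x = α 0 ∨ x = α 1 ∨ x = α 2) ∧
      |α 0 - 0| ≤ ε ∧ |α 1 - a| ≤ ε ∧ |α 2 - b| ≤ ε := by
  obtain ⟨x, ⟨hx₀, hx₁⟩, hx⟩ := exists_root_near_zero ha hab hε hεb
  obtain ⟨y, ⟨hy₀, hy₁⟩, hy⟩ := exists_root_near_left ha hab hε hεb
  obtain ⟨z, ⟨hz₀, hz₁⟩, hz⟩ := exists_root_near_right ha hab hε hεb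
  have hxy : x < y := by nlinarith
  have hyz : y < z := by linarith
  have hcubic (t : ℝ) : t * (t - a) * (t - b) - 1 = t ^ 3 + -(a + b) * t ^ 2 + a * b * t + -1 := by
    ring
  refine ⟨![x, y, z], hxy, hyz, Fin.forall_fin_succ.mpr ⟨hx, Fin.forall_fin_two.mpr ⟨hy, hz⟩⟩,
    fun t ht ↦ ?_, ?_, ?_, ?_⟩
  · rw [hcubic] at hx hy hz ht
    exact eq_or_eq_or_eq_of_cubic_roots hxy.ne (hxy.trans hyz).ne hyz.ne hx hy hz ht
  all_goals simp only [Matrix.cons_val, abs_le]; constructor <;> linarith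

end RootsNear

/-- For `n ≥ 29`, the polynomial `fₙ(X) = X(X - Fₙ)(X - 2ⁿ) - 1` has three distinct
real roots `α⁽¹⁾ < α⁽²⁾ < α⁽³⁾`, which satisfy `|α⁽ⁱ⁾ - Gᵢ| ≤ 0.5ⁿ` for
`G₁ = 0`, `G₂ = Fₙ`, `G₃ = 2ⁿ`. -/
theorem roots_estimate (n : ℕ) (hn : 29 ≤ n) :
    ∃ α : Fin 3 → ℝ, α 0 < α 1 ∧ α 1 < α 2 ∧
      (∀ i, α i * (α i - (Nat.fib n : ℝ)) * (α i - 2 ^ n) - 1 = 0) ∧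
      (∀ x : ℝ, x * (x - (Nat.fib n : ℝ)) * (x - 2 ^ n) - 1 = 0 →
        x = α 0 ∨ x = α 1 ∨ x = α 2) ∧
      |α 0 - 0| ≤ (0.5 : ℝ) ^ n ∧ |α 1 - (Nat.fib n : ℝ)| ≤ (0.5 : ℝ) ^ n ∧
      |α 2 - 2 ^ n| ≤ (0.5 : ℝ) ^ n := by
  have hfib : 3 ≤ Nat.fib n := by linarith [Nat.le_fib_self (by omega : 5 ≤ n)]
  refine exists_three_roots_near (by exact_mod_cast hfib)
    (by exact_mod_cast Nat.two_mul_fib_le_two_pow n) (by positivity) ?_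
  rw [← mul_pow]
  norm_num
end

section
/- Let n ≥ 29 be an integer, let F_n be the n-th Fibonacci number, let α^(1) < α^(2) < α^(3) be the three real roots of f_n(X) = X·(X − F_n)·(X − 2^n) − 1, let (x, y) be an integer solution of x·(x − F_n·y)·(x − 2^n·y) − y³ = ±1 with |y| ≥ 2, set β^(i) = x − α^(i)·y for i = 1,2,3, and let j ∈ {1,2,3} be such that |β^(j)| = min{|β^(1)|, |β^(2)|, |β^(3)|}, with {j, k, l} = {1,2,3}. Then |β^(j)| ≤ 4 / (y² · |α^(l) − α^(j)| · |α^(k) − α^(j)|), and |β^(i)| ≥ |y| · |α^(i) − α^(j)| / 2 for i = k and i = l. -/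
/-!
Since `α⁽¹⁾, α⁽²⁾, α⁽³⁾` are the roots of `f_n`, the binary form of the Thue equation factors as
`β⁽¹⁾ β⁽²⁾ β⁽³⁾`, so `|β⁽ʲ⁾ β⁽ᵏ⁾ β⁽ˡ⁾| = 1`. For `i ≠ j` we have `β⁽ⁱ⁾ - β⁽ʲ⁾ = (α⁽ʲ⁾ - α⁽ⁱ⁾) y`, and
minimality of `|β⁽ʲ⁾|` gives `2 |β⁽ⁱ⁾| ≥ |y| |α⁽ⁱ⁾ - α⁽ʲ⁾|`. Dividing `1` by the lower bounds
for `|β⁽ᵏ⁾|` and `|β⁽ˡ⁾|` gives the upper bound for `|β⁽ʲ⁾|`.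
-/

theorem quadratic_coeffs_eq_zero_of_three_roots_s11 {R : Type*} [CommRing R] [IsDomain R]
    {u v w a₀ a₁ a₂ : R} (h₀₁ : a₀ ≠ a₁) (h₁₂ : a₁ ≠ a₂) (h₀₂ : a₀ ≠ a₂)
    (h₀ : u * a₀ ^ 2 + v * a₀ + w = 0) (h₁ : u * a₁ ^ 2 + v * a₁ + w = 0)
    (h₂ : u * a₂ ^ 2 + v * a₂ + w = 0) :
    u = 0 ∧ v = 0 ∧ w = 0 := by
  have e₀₁ : u * (a₀ + a₁) + v = 0 :=
    mul_left_cancel₀ (sub_ne_zero.2 h₀₁) (by linear_combination h₀ - h₁)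
  have e₁₂ : u * (a₁ + a₂) + v = 0 :=
    mul_left_cancel₀ (sub_ne_zero.2 h₁₂) (by linear_combination h₁ - h₂)
  have hu : u = 0 := mul_left_cancel₀ (sub_ne_zero.2 h₀₂) (by linear_combination e₀₁ - e₁₂)
  have hv : v = 0 := by linear_combination e₀₁ - (a₀ + a₁) * hu
  exact ⟨hu, hv, by linear_combination h₀ - a₀ ^ 2 * hu - a₀ * hv⟩

theorem cubic_form_eq_prod_of_roots {R : Type*} [CommRing R] [IsDomain R] {b c d : R}
    {a : Fin 3 → R} (ha : Function.Injective a)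
    (hroot : ∀ i, a i ^ 3 + b * a i ^ 2 + c * a i + d = 0) (x y : R) :
    x ^ 3 + b * x ^ 2 * y + c * x * y ^ 2 + d * y ^ 3 = ∏ i, (x - a i * y) := by
  -- Vieta: the difference from `(X - a 0) (X - a 1) (X - a 2)` is a quadratic vanishing at each `a i`.
  obtain ⟨hb, hc, hd⟩ := quadratic_coeffs_eq_zero_of_three_roots_s11
    (u := b + (a 0 + a 1 + a 2)) (v := c - (a 0 * a 1 + a 0 * a 2 + a 1 * a 2))
    (w := d + a 0 * a 1 * a 2) (ha.ne (by decide : (0 : Fin 3) ≠ 1))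
    (ha.ne (by decide : (1 : Fin 3) ≠ 2)) (ha.ne (by decide : (0 : Fin 3) ≠ 2))
    (by linear_combination hroot 0) (by linear_combination hroot 1)
    (by linear_combination hroot 2)
  rw [Fin.prod_univ_three]
  linear_combination x ^ 2 * y * hb + x * y ^ 2 * hc + y ^ 3 * hd

theorem Fin.prod_univ_three_eq_mul_of_ne {M : Type*} [CommMonoid M] (f : Fin 3 → M)
    {j k l : Fin 3} (hjk : j ≠ k) (hkl : k ≠ l) (hjl : j ≠ l) :
    ∏ i, f i = f j * f k * f l := by
  have hj : j ∉ ({k, l} : Finset (Fin 3)) := by simp [hjk, hjl]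
  have huniv : ({j, k, l} : Finset (Fin 3)) = Finset.univ :=
    Finset.eq_univ_of_card _ (by rw [Finset.card_insert_of_notMem hj, Finset.card_pair hkl]; rfl)
  rw [← huniv, Finset.prod_insert hj, Finset.prod_pair hkl, mul_assoc]

theorem abs_mul_abs_sub_div_two_le {K : Type*} [Field K] [LinearOrder K] [IsStrictOrderedRing K]
    {x y a b : K} (h : |x - b * y| ≤ |x - a * y|) :
    |y| * |a - b| / 2 ≤ |x - a * y| := by
  have hdiff : |y| * |a - b| = |(x - b * y) - (x - a * y)| := by
    rw [← abs_mul]; congr 1; ring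
  linarith [abs_sub (x - b * y) (x - a * y)]

theorem le_one_div_mul_of_mul_mul_eq_one {K : Type*} [Field K] [LinearOrder K]
    [IsStrictOrderedRing K] {p q r s t : K} (hp : 0 ≤ p) (hpqr : p * q * r = 1)
    (hs : 0 < s) (ht : 0 < t) (hsq : s ≤ q) (htr : t ≤ r) :
    p ≤ 1 / (s * t) := by
  rw [le_div_iff₀ (mul_pos hs ht), ← hpqr, mul_assoc]
  exact mul_le_mul_of_nonneg_left (mul_le_mul hsq htr ht.le (hs.le.trans hsq)) hp

theorem beta_estimates_general (n : ℕ)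
    (α : Fin 3 → ℝ)
    (hord : α 0 < α 1 ∧ α 1 < α 2)
    (hroot : ∀ i, α i * (α i - (Nat.fib n : ℝ)) * (α i - 2 ^ n) - 1 = 0)
    (x y : ℤ)
    (heq : x * (x - (Nat.fib n : ℤ) * y) * (x - 2 ^ n * y) - y ^ 3 = 1 ∨
           x * (x - (Nat.fib n : ℤ) * y) * (x - 2 ^ n * y) - y ^ 3 = -1)
    (hy : 2 ≤ |y|)
    (β : Fin 3 → ℝ) (hβ : ∀ i, β i = (x : ℝ) - α i * (y : ℝ))
    (j k l : Fin 3) (hjk : j ≠ k) (hkl : k ≠ l) (hjl : j ≠ l)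
    (hmin : ∀ i, |β j| ≤ |β i|) :
    |β j| ≤ 4 / ((y : ℝ) ^ 2 * |α l - α j| * |α k - α j|) ∧
    |β k| ≥ |(y : ℝ)| * |α k - α j| / 2 ∧
    |β l| ≥ |(y : ℝ)| * |α l - α j| / 2 := by
  have hα : Function.Injective α :=
    (Fin.strictMono_iff_lt_succ.2 (by simpa [Fin.forall_fin_two] using hord)).injective
  have hform : (x : ℝ) * (x - Nat.fib n * y) * (x - 2 ^ n * y) - y ^ 3 = ∏ i, β i := by
    simp only [hβ]
    rw [← cubic_form_eq_prod_of_roots (b := -((Nat.fib n : ℝ) + 2 ^ n))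
      (c := (Nat.fib n : ℝ) * 2 ^ n) (d := -1) hα (fun i => by linear_combination hroot i)]
    ring
  have hunit : |x * (x - Nat.fib n * y) * (x - 2 ^ n * y) - y ^ 3| = 1 := by
    rcases heq with h | h <;> simp [h]
  have hprod : |β j| * |β k| * |β l| = 1 := by
    rw [← abs_mul, ← abs_mul, ← Fin.prod_univ_three_eq_mul_of_ne β hjk hkl hjl, ← hform]
    exact_mod_cast hunit
  have hlow : ∀ i, |β i| ≥ |(y : ℝ)| * |α i - α j| / 2 := fun i => by
    rw [hβ]; exact abs_mul_abs_sub_div_two_le (by rw [← hβ, ← hβ]; exact hmin i)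
  have hy₀ : (y : ℝ) ≠ 0 := by
    have : y ≠ 0 := by rintro rfl; simp at hy
    exact_mod_cast this
  have hgap : ∀ {i}, j ≠ i → 0 < |(y : ℝ)| * |α i - α j| / 2 := fun h => by
    have := abs_pos.2 (sub_ne_zero.2 (hα.ne h.symm))
    positivity
  refine ⟨?_, hlow k, hlow l⟩
  refine (le_one_div_mul_of_mul_mul_eq_one (abs_nonneg _) hprod (hgap hjk) (hgap hjl) (hlow k)
    (hlow l)).trans_eq ?_
  rw [← sq_abs (y : ℝ)]
  field_simp
  ring

/-- Size estimates for `β⁽ⁱ⁾ = x - α⁽ⁱ⁾ y`, where `(x, y)` is a solution of the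
Thue equation with `|y| ≥ 2` of type `j` (i.e. `|β⁽ʲ⁾|` is minimal) and
`{j, k, l} = {1, 2, 3}`. -/
theorem beta_estimates (n : ℕ) (hn : 29 ≤ n)
    (α : Fin 3 → ℝ)
    (hord : α 0 < α 1 ∧ α 1 < α 2)
    (hroot : ∀ i, α i * (α i - (Nat.fib n : ℝ)) * (α i - 2 ^ n) - 1 = 0)
    (x y : ℤ)
    (heq : x * (x - (Nat.fib n : ℤ) * y) * (x - 2 ^ n * y) - y ^ 3 = 1 ∨
           x * (x - (Nat.fib n : ℤ) * y) * (x - 2 ^ n * y) - y ^ 3 = -1)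
    (hy : 2 ≤ |y|)
    (β : Fin 3 → ℝ) (hβ : ∀ i, β i = (x : ℝ) - α i * (y : ℝ))
    (j k l : Fin 3) (hjk : j ≠ k) (hkl : k ≠ l) (hjl : j ≠ l)
    (hmin : ∀ i, |β j| ≤ |β i|) :
    |β j| ≤ 4 / ((y : ℝ) ^ 2 * |α l - α j| * |α k - α j|) ∧
    |β k| ≥ |(y : ℝ)| * |α k - α j| / 2 ∧
    |β l| ≥ |(y : ℝ)| * |α l - α j| / 2 :=
  beta_estimates_general n α hord hroot x y heq hy β hβ j k l hjk hkl hjl hmin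
end
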